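/- arXiv:1206.4869 — 5 statements merged into one kernel-verified Lean document; each statement's English description precedes it below -/
import Mathlib

section
/- Let a₁, a₂, a₃, a₄, a₅ be elements of a commutative ring R. Then the Conway function of the torus-knot 5₁ family admits two tangle factorizations and one full factorization: (a₁a₂a₃, a₁a₂ + a₂a₃ + a₃a₁) · M · (a₄a₅, a₄+a₅)ᵀ = (a₁a₂, a₁+a₂) · M · (a₃a₄a₅, a₃a₄ + a₄a₅ + a₅a₃)ᵀ = (a₁, 1) · M · [[0,a₂],[a₂,1]] · M · [[0,a₃],[a₃,1]] · M · [[0,a₄],[a₄,1]] · M · (a₅, 1)ᵀ. -/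
theorem stmt12 {R : Type*} [CommRing R] (a₁ a₂ a₃ a₄ a₅ : R) :
    ((!![a₁ * a₂ * a₃, a₁ * a₂ + a₂ * a₃ + a₃ * a₁] : Matrix (Fin 1) (Fin 2) R) * !![(0 : R), 1; 1, 0] *
        !![a₄ * a₅; a₄ + a₅]) 0 0 =
      ((!![a₁ * a₂, a₁ + a₂] : Matrix (Fin 1) (Fin 2) R) * !![(0 : R), 1; 1, 0] *
        !![a₃ * a₄ * a₅; a₃ * a₄ + a₄ * a₅ + a₅ * a₃]) 0 0 ∧
    ((!![a₁ * a₂, a₁ + a₂] : Matrix (Fin 1) (Fin 2) R) * !![(0 : R), 1; 1, 0] *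
        !![a₃ * a₄ * a₅; a₃ * a₄ + a₄ * a₅ + a₅ * a₃]) 0 0 =
      ((!![a₁, 1] : Matrix (Fin 1) (Fin 2) R) * !![(0 : R), 1; 1, 0] * !![0, a₂; a₂, 1] * !![(0 : R), 1; 1, 0] *
        !![0, a₃; a₃, 1] * !![(0 : R), 1; 1, 0] * !![0, a₄; a₄, 1] * !![(0 : R), 1; 1, 0] * !![a₅; 1]) 0 0 := by
  constructor <;> · simp [Matrix.mul_apply, Fin.sum_univ_succ]; ring
end

section
/- Let a₁, a₂, a₃, a₄, a₅ be elements of a commutative ring R. Then (a₁a₂a₃, a₁a₂ + a₂a₃ + a₃a₁) · M · (a₄, a₄a₅+1)ᵀ = (a₁a₂, a₁+a₂) · M · (a₃a₄, a₃a₄a₅ + a₃ + a₄)ᵀ = (a₁, 1) · M · [[0,a₂],[a₂,1]] · M · [[0,a₃],[a₃,1]] · M · [[0,a₄],[a₄,1]] · M · (1, a₅)ᵀ. -/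
theorem stmt13 {R : Type*} [CommRing R] (a₁ a₂ a₃ a₄ a₅ : R) :
    ((!![a₁ * a₂ * a₃, a₁ * a₂ + a₂ * a₃ + a₃ * a₁] : Matrix (Fin 1) (Fin 2) R) * !![(0 : R), 1; 1, 0] *
        !![a₄; a₄ * a₅ + 1]) 0 0 =
      ((!![a₁ * a₂, a₁ + a₂] : Matrix (Fin 1) (Fin 2) R) * !![(0 : R), 1; 1, 0] *
        !![a₃ * a₄; a₃ * a₄ * a₅ + a₃ + a₄]) 0 0 ∧
    ((!![a₁ * a₂, a₁ + a₂] : Matrix (Fin 1) (Fin 2) R) * !![(0 : R), 1; 1, 0] *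
        !![a₃ * a₄; a₃ * a₄ * a₅ + a₃ + a₄]) 0 0 =
      ((!![a₁, 1] : Matrix (Fin 1) (Fin 2) R) * !![(0 : R), 1; 1, 0] * !![0, a₂; a₂, 1] * !![(0 : R), 1; 1, 0] *
        !![0, a₃; a₃, 1] * !![(0 : R), 1; 1, 0] * !![0, a₄; a₄, 1] * !![(0 : R), 1; 1, 0] * !![1; a₅]) 0 0 := by
  constructor <;> · simp [Matrix.mul_apply, Fin.sum_univ_two] <;> ring
end

section
/- Let a₁, a₂, a₃, a₄, a₅ be elements of a commutative ring R. Then the Conway function of the knot 5₂ family satisfies (a₁+a₂, a₁a₂) · M · (a₃a₄a₅, a₃a₄ + a₄a₅ + a₅a₃)ᵀ = ((a₁+a₂)a₃, a₁a₂a₃ + a₁ + a₂) · M · (a₄a₅, a₄+a₅)ᵀ = (1, a₁) · M · [[1,a₂],[a₂,0]] · M · [[0,a₃],[a₃,1]] · M · [[0,a₄],[a₄,1]] · M · (a₅, 1)ᵀ. -/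
theorem stmt14 {R : Type*} [CommRing R] (a₁ a₂ a₃ a₄ a₅ : R) :
    ((!![a₁ + a₂, a₁ * a₂] : Matrix (Fin 1) (Fin 2) R) * !![(0 : R), 1; 1, 0] *
        !![a₃ * a₄ * a₅; a₃ * a₄ + a₄ * a₅ + a₅ * a₃]) 0 0 =
      ((!![(a₁ + a₂) * a₃, a₁ * a₂ * a₃ + a₁ + a₂] : Matrix (Fin 1) (Fin 2) R) * !![(0 : R), 1; 1, 0] *
        !![a₄ * a₅; a₄ + a₅]) 0 0 ∧
    ((!![(a₁ + a₂) * a₃, a₁ * a₂ * a₃ + a₁ + a₂] : Matrix (Fin 1) (Fin 2) R) * !![(0 : R), 1; 1, 0] *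
        !![a₄ * a₅; a₄ + a₅]) 0 0 =
      ((!![1, a₁] : Matrix (Fin 1) (Fin 2) R) * !![(0 : R), 1; 1, 0] * !![1, a₂; a₂, 0] * !![(0 : R), 1; 1, 0] *
        !![0, a₃; a₃, 1] * !![(0 : R), 1; 1, 0] * !![0, a₄; a₄, 1] * !![(0 : R), 1; 1, 0] * !![a₅; 1]) 0 0 := by
  constructor <;> · simp [Matrix.mul_apply, Fin.sum_univ_succ]; ring
end

section
/- Let a₁, …, a₆ be elements of a commutative ring R. Then the Conway function of the torus link 6₂¹ family satisfies (a₁a₂a₃, a₁a₂ + a₂a₃ + a₃a₁) · M · (a₄a₅a₆, a₄a₅ + a₅a₆ + a₆a₄)ᵀ = (a₁, 1) · M · [[0,a₂],[a₂,1]] · M · [[0,a₃],[a₃,1]] · M · [[0,a₄],[a₄,1]] · M · [[0,a₅],[a₅,1]] · M · (a₆, 1)ᵀ. -/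
theorem stmt17 {R : Type*} [CommRing R] (a₁ a₂ a₃ a₄ a₅ a₆ : R) :
    ((!![a₁ * a₂ * a₃, a₁ * a₂ + a₂ * a₃ + a₃ * a₁] : Matrix (Fin 1) (Fin 2) R) * !![(0 : R), 1; 1, 0] *
        !![a₄ * a₅ * a₆; a₄ * a₅ + a₅ * a₆ + a₆ * a₄]) 0 0 =
      ((!![a₁, 1] : Matrix (Fin 1) (Fin 2) R) * !![(0 : R), 1; 1, 0] * !![0, a₂; a₂, 1] * !![(0 : R), 1; 1, 0] *
        !![0, a₃; a₃, 1] * !![(0 : R), 1; 1, 0] * !![0, a₄; a₄, 1] * !![(0 : R), 1; 1, 0] * !![0, a₅; a₅, 1] * !![(0 : R), 1; 1, 0] *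
        !![a₆; 1]) 0 0 := by
  simp [Matrix.mul_apply, Fin.sum_univ_succ]
  ring
end

section
/- Let a₁, …, a₆ be elements of a commutative ring R. Then the two 3-tangle factorizations of the Conway function of a family with seed the Borromean link agree: (a₁a₃a₅ + a₃ + a₅, 1, a₁a₃, a₁a₅, a₁) · G · (1, a₂, a₄, a₆, a₂a₄ + a₄a₆ + a₆a₂)ᵀ = (1 + a₂a₃ + a₂a₅, a₂a₃a₅, a₅, a₃, a₃a₅) · G · (a₁a₄a₆, a₄a₆, a₆a₁, a₁a₄, a₁ + a₄ + a₆)ᵀ, where each side is the 1×1 matrix product of a 1×5 row vector, the matrix G, and a 5×1 column vector, identified with its unique entry. -/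
theorem stmt19 {R : Type*} [CommRing R] (a₁ a₂ a₃ a₄ a₅ a₆ : R) :
    ((!![a₁ * a₃ * a₅ + a₃ + a₅, 1, a₁ * a₃, a₁ * a₅, a₁] : Matrix (Fin 1) (Fin 5) R) *
        !![(0 : R),0,0,0,1; 0,0,1,1,0; 0,1,0,1,0; 0,1,1,0,0; 1,0,0,0,0] *
        !![1; a₂; a₄; a₆; a₂ * a₄ + a₄ * a₆ + a₆ * a₂]) 0 0 =
      ((!![1 + a₂ * a₃ + a₂ * a₅, a₂ * a₃ * a₅, a₅, a₃, a₃ * a₅] : Matrix (Fin 1) (Fin 5) R) *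
        !![(0 : R),0,0,0,1; 0,0,1,1,0; 0,1,0,1,0; 0,1,1,0,0; 1,0,0,0,0] *
        !![a₁ * a₄ * a₆; a₄ * a₆; a₆ * a₁; a₁ * a₄; a₁ + a₄ + a₆]) 0 0 := by
  simp [Matrix.mul_apply, Fin.sum_univ_five]
  ring
end
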